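/- For every α ∈ (0,1) and every positive integer n, the sequence q_n^{(i)} = P(S'_n − S_n = i) satisfies q_n^{(−i)} = q_n^{(i)} for all integers i, and is strictly decreasing in i for 0 ≤ i ≤ n: q_n^{(i)} > q_n^{(i+1)} for all 0 ≤ i ≤ n. -/

import Mathlib

open Finset Filter Topology

/-- `p α r d n = P(S_{n+r} ≥ S'_n + d)` for independent binomials with success
probability `α`, given by its explicit combinatorial formula. -/
noncomputable def competeProb (α : ℝ) (r d n : ℕ) : ℝ :=
  ∑ i ∈ Finset.range (n + 1), ∑ j ∈ Finset.Icc (i + d) (n + r),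
    ((n + r).choose j : ℝ) * (n.choose i : ℝ) * α ^ (i + j) * (1 - α) ^ (2 * n + r - i - j)

/-- The binomial probability `P(S_r = i) = C(r,i) α^i (1-α)^(r-i)`. -/
noncomputable def binomProb (α : ℝ) (r i : ℕ) : ℝ :=
  (r.choose i : ℝ) * α ^ i * (1 - α) ^ (r - i)

/-- `q α n k = P(S'_n - S_n = k)` for independent binomials `S_n, S'_n` with `n`
trials and success probability `α`, given by its explicit combinatorial formula
(it depends on `k` only through `|k|`). -/
noncomputable def diffProb (α : ℝ) (n : ℕ) (k : ℤ) : ℝ :=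
  ∑ i ∈ Finset.range (n - k.natAbs + 1),
    (n.choose i : ℝ) * (n.choose (i + k.natAbs) : ℝ) * α ^ (2 * i + k.natAbs) *
      (1 - α) ^ (2 * n - 2 * i - k.natAbs)

/-!
Extend the binomial law `b n` by zero to `ℤ`, so that `q n k = ∑ᵢ b n i * b n (i + k)` is its
autocorrelation. Pascal's rule `b (n + 1) i = α * b n (i - 1) + (1 - α) * b n i` turns into
`q (n + 1) k = (α² + (1 - α)²) * q n k + α (1 - α) * (q n (k - 1) + q n (k + 1))`, a positive
combination of shifts of `q n`; hence strict decrease of `q n` on `[0, n]` (and `q n = 0` beyond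
`n`) propagates from `n` to `n + 1`, starting from `q 0 = δ₀`.
-/

open Function

lemma binomProb_eq_zero_of_lt (α : ℝ) {n i : ℕ} (h : n < i) : binomProb α n i = 0 := by
  simp [binomProb, Nat.choose_eq_zero_of_lt h]

lemma binomProb_succ_zero (α : ℝ) (n : ℕ) :
    binomProb α (n + 1) 0 = (1 - α) * binomProb α n 0 := by
  simp [binomProb, pow_succ, mul_comm]

lemma binomProb_succ_succ (α : ℝ) (n i : ℕ) :
    binomProb α (n + 1) (i + 1) = α * binomProb α n i + (1 - α) * binomProb α n (i + 1) := by
  rcases lt_or_ge n i with h | h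
  · simp [binomProb_eq_zero_of_lt α h, binomProb_eq_zero_of_lt α (Nat.succ_lt_succ h),
      binomProb_eq_zero_of_lt α (h.trans (Nat.lt_succ_self i))]
  · obtain ⟨d, rfl⟩ := Nat.exists_eq_add_of_le h
    rcases d with _ | d
    · simp [binomProb]
      ring
    · simp only [binomProb, Nat.choose_succ_succ, Nat.cast_add,
        show i + (d + 1) + 1 - (i + 1) = d + 1 by omega, show i + (d + 1) - i = d + 1 by omega,
        show i + (d + 1) - (i + 1) = d by omega]
      ring

noncomputable def binomProbInt (α : ℝ) (n : ℕ) (i : ℤ) : ℝ :=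
  if 0 ≤ i then binomProb α n i.toNat else 0

section binomProbInt

variable (α : ℝ) (n : ℕ)

@[simp]
lemma binomProbInt_natCast (i : ℕ) : binomProbInt α n i = binomProb α n i := by
  simp [binomProbInt]

lemma binomProbInt_of_neg {i : ℤ} (h : i < 0) : binomProbInt α n i = 0 := by
  simp [binomProbInt, h.not_ge]

lemma binomProbInt_of_lt {i : ℤ} (h : n < i) : binomProbInt α n i = 0 := by
  lift i to ℕ using n.cast_nonneg.trans h.le
  simpa using binomProb_eq_zero_of_lt α (by exact_mod_cast h)

lemma binomProbInt_succ (i : ℤ) :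
    binomProbInt α (n + 1) i = α * binomProbInt α n (i - 1) + (1 - α) * binomProbInt α n i := by
  rcases lt_or_ge i 0 with h | h
  · simp [binomProbInt_of_neg, h, sub_neg.2 (h.trans zero_lt_one)]
  lift i to ℕ using h
  cases i with
  | zero =>
    rw [binomProbInt_natCast, binomProbInt_natCast, binomProbInt_of_neg α n (by simp),
      binomProb_succ_zero, mul_zero, zero_add]
  | succ i =>
    rw [Nat.cast_succ, add_sub_cancel_right, ← Nat.cast_succ]
    simp only [binomProbInt_natCast, binomProb_succ_succ]

@[fun_prop]
lemma hasFiniteSupport_binomProbInt : HasFiniteSupport (binomProbInt α n) := by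
  refine (Set.finite_Icc 0 (n : ℤ)).subset fun i hi ↦ ?_
  by_contra hi'
  rcases not_and_or.1 hi' with h | h
  · exact hi (binomProbInt_of_neg α n (not_le.1 h))
  · exact hi (binomProbInt_of_lt α n (not_le.1 h))

end binomProbInt

noncomputable def binomCorr (α : ℝ) (n : ℕ) (k : ℤ) : ℝ :=
  ∑ᶠ i : ℤ, binomProbInt α n i * binomProbInt α n (i + k)

section binomCorr

variable (α : ℝ) (n : ℕ)

lemma binomCorr_neg (k : ℤ) : binomCorr α n (-k) = binomCorr α n k := by
  rw [binomCorr, ← finsum_comp_equiv (Equiv.addRight k)]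
  simp [binomCorr, mul_comm]

lemma binomCorr_eq_zero_of_lt {k : ℤ} (h : n < k) : binomCorr α n k = 0 := by
  refine finsum_eq_zero_of_forall_eq_zero fun i ↦ ?_
  rcases lt_or_ge i 0 with hi | hi
  · rw [binomProbInt_of_neg α n hi, zero_mul]
  · rw [binomProbInt_of_lt α n (i := i + k) (by omega), mul_zero]

lemma binomCorr_zero_zero : binomCorr α 0 0 = 1 := by
  rw [binomCorr, finsum_eq_single _ 0 fun i hi ↦ ?_]
  · simp [binomProbInt, binomProb]
  rcases hi.lt_or_gt with hi | hi
  · rw [binomProbInt_of_neg α 0 hi, zero_mul]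
  · rw [binomProbInt_of_lt α 0 (by simpa using hi), zero_mul]

lemma binomCorr_succ (k : ℤ) :
    binomCorr α (n + 1) k = (α ^ 2 + (1 - α) ^ 2) * binomCorr α n k
      + α * (1 - α) * (binomCorr α n (k - 1) + binomCorr α n (k + 1)) := by
  set b := binomProbInt α n
  have shift (f : ℤ → ℝ) : ∑ᶠ i, f (i - 1) = ∑ᶠ i, f i := finsum_comp_equiv (Equiv.subRight 1)
  have expand (i : ℤ) : binomProbInt α (n + 1) i * binomProbInt α (n + 1) (i + k) =
      α ^ 2 * (b (i - 1) * b (i - 1 + k)) + α * (1 - α) * (b (i - 1) * b (i - 1 + (k + 1)))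
        + (α * (1 - α) * (b i * b (i + (k - 1))) + (1 - α) ^ 2 * (b i * b (i + k))) := by
    rw [binomProbInt_succ, binomProbInt_succ, show i - 1 + k = i + k - 1 by ring,
      show i - 1 + (k + 1) = i + k by ring, show i + (k - 1) = i + k - 1 by ring]
    ring
  rw [binomCorr, finsum_congr expand, finsum_add_distrib, finsum_add_distrib, finsum_add_distrib,
    ← mul_finsum, ← mul_finsum, ← mul_finsum, ← mul_finsum, shift fun i ↦ b i * b (i + k),
    shift fun i ↦ b i * b (i + (k + 1))]
  · simp only [binomCorr, b]
    ring
  -- finite-support side goals; the discharger proves injectivity of the index shifts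
  all_goals fun_prop (disch := intro _ _ h; simpa using h)

lemma diffProb_natCast (k : ℕ) : diffProb α n k = binomCorr α n k := by
  rcases lt_or_ge n k with hk | hk
  · simp [binomCorr_eq_zero_of_lt α n (Nat.cast_lt.2 hk), diffProb,
      Nat.choose_eq_zero_of_lt (hk.trans_le le_add_self)]
  rw [binomCorr, finsum_eq_finsetSum_of_support_subset _
    (s := (range (n - k + 1)).map Nat.castEmbedding) fun i hi ↦ ?_, sum_map]
  · refine sum_congr rfl fun i hi ↦ ?_
    have hik : i + k ≤ n := by rw [mem_range] at hi; omega
    simp only [Nat.castEmbedding_apply, ← Nat.cast_add, binomProbInt_natCast, binomProb,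
      Int.natAbs_natCast]
    rw [show 2 * n - 2 * i - k = n - i + (n - (i + k)) by omega, two_mul, add_assoc, pow_add,
      pow_add, pow_add]
    ring
  · obtain ⟨hi₁, hi₂⟩ := mul_ne_zero_iff.1 hi
    have h0 : 0 ≤ i := not_lt.1 fun h ↦ hi₁ (binomProbInt_of_neg α n h)
    have hn : i + k ≤ n := not_lt.1 fun h ↦ hi₂ (binomProbInt_of_lt α n h)
    lift i to ℕ using h0
    simp only [coe_map, Nat.castEmbedding_apply, Set.mem_image, mem_coe, mem_range, Nat.cast_inj,
      exists_eq_right]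
    omega

end binomCorr

lemma binomCorr_succ_lt {α : ℝ} (hα : α ∈ Set.Ioo 0 1) {n k : ℕ} (hk : k ≤ n) :
    binomCorr α n (k + 1) < binomCorr α n k := by
  induction n generalizing k with
  | zero =>
    obtain rfl : k = 0 := Nat.le_zero.1 hk
    simp [binomCorr_eq_zero_of_lt, binomCorr_zero_zero]
  | succ n ih =>
    obtain ⟨hα₀, hα₁⟩ := hα
    have hq (k : ℕ) : binomCorr α n (k + 1) ≤ binomCorr α n k := by
      rcases le_or_gt k n with h | h
      · exact (ih h).le
      · rw [binomCorr_eq_zero_of_lt α n (by omega), binomCorr_eq_zero_of_lt α n (by omega)]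
    have hβ : 0 < α * (1 - α) := mul_pos hα₀ (sub_pos.2 hα₁)
    have hc : α * (1 - α) < α ^ 2 + (1 - α) ^ 2 := by nlinarith [sq_nonneg (2 * α - 1)]
    rw [binomCorr_succ, binomCorr_succ]
    rcases k with _ | m
    -- at `k = 0` the recursion reaches `q (-1) = q 1`, so `α (1 - α) < α ^ 2 + (1 - α) ^ 2` is needed
    · have h0 := ih (Nat.zero_le n)
      have h1 := hq 1
      simp only [Nat.cast_zero, zero_sub, zero_add, binomCorr_neg, sub_self] at h0 h1 ⊢
      push_cast at h1 ⊢
      linarith [mul_lt_mul_of_pos_right hc (sub_pos.2 h0), mul_le_mul_of_nonneg_left h1 hβ.le]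
    · have hm := ih (Nat.le_of_succ_le_succ hk)
      have h1 := hq (m + 1)
      have h2 := hq (m + 1 + 1)
      push_cast at h1 h2 ⊢
      simp only [add_sub_cancel_right]
      have hc₀ : 0 ≤ α ^ 2 + (1 - α) ^ 2 := by positivity
      linarith [mul_lt_mul_of_pos_left hm hβ, mul_le_mul_of_nonneg_left h1 hc₀,
        mul_le_mul_of_nonneg_left h2 hβ.le]

theorem diffProb_symm_and_strictAnti_general (α : ℝ) (hα : α ∈ Set.Ioo (0 : ℝ) 1)
    (n : ℕ) :
    (∀ i : ℤ, diffProb α n (-i) = diffProb α n i) ∧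
    (∀ i : ℕ, i ≤ n → diffProb α n ((i : ℤ) + 1) < diffProb α n (i : ℤ)) := by
  refine ⟨fun i ↦ by simp only [diffProb, Int.natAbs_neg], fun i hi ↦ ?_⟩
  rw [← Nat.cast_succ, diffProb_natCast, diffProb_natCast, Nat.cast_succ]
  exact binomCorr_succ_lt hα hi

theorem diffProb_symm_and_strictAnti (α : ℝ) (hα : α ∈ Set.Ioo (0 : ℝ) 1)
    (n : ℕ) (hn : 1 ≤ n) :
    (∀ i : ℤ, diffProb α n (-i) = diffProb α n i) ∧
    (∀ i : ℕ, i ≤ n → diffProb α n ((i : ℤ) + 1) < diffProb α n (i : ℤ)) :=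
  diffProb_symm_and_strictAnti_general α hα n
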